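/- Let G be an abelian ℓ-group and let 𝓟 be a nonempty set of prime subgroups of G with ⋂𝓟 = {0}. Then every minimal prime subgroup of G belongs to the closure of 𝓟 in Spec(G) with respect to the patch topology. -/

import Mathlib

/-!
Common definitions for lattice-ordered groups (ℓ-groups), written additively.
An ℓ-group is modeled as `[Lattice G] [AddGroup G]` together with the two
`CovariantClass` hypotheses expressing that translation is order-preserving.
-/

/-- The absolute value in an ℓ-group: `|g| = (g ⊔ 0) + ((-g) ⊔ 0)`. -/
def labs {G : Type*} [Lattice G] [AddGroup G] (g : G) : G := (g ⊔ 0) + (-g ⊔ 0)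

/-- A convex ℓ-subgroup of `G`: a subgroup which is a sublattice and is convex. -/
def IsConvexLSubgroup {G : Type*} [Lattice G] [AddGroup G] (H : Set G) : Prop :=
  (0 : G) ∈ H ∧ (∀ a ∈ H, -a ∈ H) ∧ (∀ a ∈ H, ∀ b ∈ H, a + b ∈ H) ∧
  (∀ a ∈ H, ∀ b ∈ H, a ⊔ b ∈ H) ∧ (∀ a ∈ H, ∀ b ∈ H, a ⊓ b ∈ H) ∧
  (∀ a ∈ H, ∀ b ∈ H, ∀ g : G, a ≤ g → g ≤ b → g ∈ H)

/-- The polar `g^⊥ = {h : |h| ⊓ |g| = 0}`. -/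
def polar {G : Type*} [Lattice G] [AddGroup G] (g : G) : Set G :=
  {h : G | labs h ⊓ labs g = 0}

/-- The double polar `g^{⊥⊥} = (g^⊥)^⊥ = {h : ∀ k ∈ g^⊥, |h| ⊓ |k| = 0}`. -/
def biPolar {G : Type*} [Lattice G] [AddGroup G] (g : G) : Set G :=
  {h : G | ∀ k ∈ polar g, labs h ⊓ labs k = 0}

/-- A d-subgroup: a convex ℓ-subgroup containing the double polar of each of its elements. -/
def IsDSubgroup {G : Type*} [Lattice G] [AddGroup G] (H : Set G) : Prop :=
  IsConvexLSubgroup H ∧ ∀ h ∈ H, biPolar h ⊆ H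

/-- A Martínez ℓ-group: every convex ℓ-subgroup is a d-subgroup. -/
def Martinez (G : Type*) [Lattice G] [AddGroup G] : Prop :=
  ∀ H : Set G, IsConvexLSubgroup H → IsDSubgroup H

/-- `G(g)`, the smallest convex ℓ-subgroup of `G` containing `g`. -/
def principalCLS {G : Type*} [Lattice G] [AddGroup G] (g : G) : Set G :=
  {x : G | ∀ H : Set G, IsConvexLSubgroup H → g ∈ H → x ∈ H}

/-- A prime subgroup: a proper convex ℓ-subgroup `P` with `a ⊓ b ∈ P → a ∈ P ∨ b ∈ P`. -/
def IsPrimeSubgroup {G : Type*} [Lattice G] [AddGroup G] (P : Set G) : Prop :=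
  IsConvexLSubgroup P ∧ P ≠ Set.univ ∧ ∀ a b : G, a ⊓ b ∈ P → a ∈ P ∨ b ∈ P

/-- A minimal prime subgroup. -/
def IsMinimalPrimeLSubgroup {G : Type*} [Lattice G] [AddGroup G] (P : Set G) : Prop :=
  IsPrimeSubgroup P ∧ ∀ Q : Set G, IsPrimeSubgroup Q → Q ⊆ P → Q = P

/-- `Spec(G)`, the set of prime subgroups of `G`, as a type. -/
abbrev SpecType (G : Type*) [Lattice G] [AddGroup G] : Type _ :=
  {P : Set G // IsPrimeSubgroup P}

/-- `U(g) = {P ∈ Spec(G) : g ∉ P}`. -/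
def Uset {G : Type*} [Lattice G] [AddGroup G] (g : G) : Set (SpecType G) :=
  {P : SpecType G | g ∉ P.1}

/-- `V(g) = {P ∈ Spec(G) : g ∈ P}`. -/
def Vset {G : Type*} [Lattice G] [AddGroup G] (g : G) : Set (SpecType G) :=
  {P : SpecType G | g ∈ P.1}

/-- The patch topology on `Spec(G)`, generated by all the sets `U(g)` and `V(g)`. -/
def patchTop (G : Type*) [Lattice G] [AddGroup G] : TopologicalSpace (SpecType G) :=
  TopologicalSpace.generateFrom
    ({S : Set (SpecType G) | ∃ g : G, S = Uset g} ∪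
      {S : Set (SpecType G) | ∃ g : G, S = Vset g})

/-- The hull-kernel topology on `Spec(G)`, with base `{U(g) : g ∈ G}`. -/
def hkTop (G : Type*) [Lattice G] [AddGroup G] : TopologicalSpace (SpecType G) :=
  TopologicalSpace.generateFrom {S : Set (SpecType G) | ∃ g : G, S = Uset g}

set_option linter.unusedSectionVars false
set_option linter.unusedVariables false

section Aux
variable {G : Type*} [Lattice G] [AddCommGroup G]
    [CovariantClass G G (· + ·) (· ≤ ·)]
    [CovariantClass G G (Function.swap (· + ·)) (· ≤ ·)]

lemma labs_eq_abs (g : G) : labs g = |g| := posPart_add_negPart g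

lemma labs_eq_sup (g : G) : labs g = g ⊔ -g := labs_eq_abs g

lemma labs_nonneg (g : G) : 0 ≤ labs g := add_nonneg le_sup_right le_sup_right

lemma le_labs (g : G) : g ≤ labs g := by rw [labs_eq_sup]; exact le_sup_left
lemma neg_le_labs (g : G) : -g ≤ labs g := by rw [labs_eq_sup]; exact le_sup_right

lemma labs_neg (g : G) : labs (-g) = labs g := by
  rw [labs_eq_sup, labs_eq_sup, neg_neg, sup_comm]

lemma labs_of_nonneg {g : G} (h : 0 ≤ g) : labs g = g := by
  rw [labs_eq_sup, sup_eq_left]; exact (neg_nonpos.mpr h).trans h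

lemma labs_le_iff {g x : G} : labs g ≤ x ↔ g ≤ x ∧ -g ≤ x := by
  rw [labs_eq_sup, sup_le_iff]

lemma labs_eq_zero {g : G} (h : labs g = 0) : g = 0 :=
  le_antisymm (h ▸ le_labs g) (neg_nonpos.mp (h ▸ neg_le_labs g))

lemma labs_add_le (a b : G) : labs (a + b) ≤ labs a + labs b := by
  rw [labs_le_iff]
  constructor
  · exact add_le_add (le_labs a) (le_labs b)
  · rw [neg_add]; exact add_le_add (neg_le_labs a) (neg_le_labs b)

lemma labs_sup_le (a b : G) : labs (a ⊔ b) ≤ labs a + labs b := by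
  rw [labs_le_iff]
  constructor
  · exact sup_le ((le_labs a).trans (le_add_of_nonneg_right (labs_nonneg b)))
      ((le_labs b).trans (le_add_of_nonneg_left (labs_nonneg a)))
  · rw [neg_sup]
    exact (inf_le_left).trans ((neg_le_labs a).trans (le_add_of_nonneg_right (labs_nonneg b)))

lemma labs_inf_le (a b : G) : labs (a ⊓ b) ≤ labs a + labs b := by
  rw [labs_le_iff]
  constructor
  · exact (inf_le_left).trans ((le_labs a).trans (le_add_of_nonneg_right (labs_nonneg b)))
  · rw [neg_inf]
    exact sup_le ((neg_le_labs a).trans (le_add_of_nonneg_right (labs_nonneg b)))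
      ((neg_le_labs b).trans (le_add_of_nonneg_left (labs_nonneg a)))

end Aux

section Aux2
variable {G : Type*} [Lattice G] [AddCommGroup G]
    [CovariantClass G G (· + ·) (· ≤ ·)]
    [CovariantClass G G (Function.swap (· + ·)) (· ≤ ·)]

namespace IsConvexLSubgroup

variable {H : Set G} (hH : IsConvexLSubgroup H)
include hH

lemma zero_mem : (0:G) ∈ H := hH.1
lemma neg_mem {a : G} (h : a ∈ H) : -a ∈ H := hH.2.1 a h
lemma add_mem {a b : G} (ha : a ∈ H) (hb : b ∈ H) : a + b ∈ H := hH.2.2.1 a ha b hb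
lemma sup_mem {a b : G} (ha : a ∈ H) (hb : b ∈ H) : a ⊔ b ∈ H := hH.2.2.2.1 a ha b hb
lemma inf_mem {a b : G} (ha : a ∈ H) (hb : b ∈ H) : a ⊓ b ∈ H := hH.2.2.2.2.1 a ha b hb
lemma convex {a b g : G} (ha : a ∈ H) (hb : b ∈ H) (h1 : a ≤ g) (h2 : g ≤ b) : g ∈ H :=
  hH.2.2.2.2.2 a ha b hb g h1 h2

lemma labs_mem {a : G} (h : a ∈ H) : labs a ∈ H :=
  hH.add_mem (hH.sup_mem h hH.zero_mem) (hH.sup_mem (hH.neg_mem h) hH.zero_mem)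

lemma mem_of_labs_le {a x : G} (hx : x ∈ H) (h : labs a ≤ x) : a ∈ H :=
  hH.convex (hH.neg_mem hx) hx (neg_le.mp ((neg_le_labs a).trans h)) ((le_labs a).trans h)

lemma mem_of_labs_mem {a : G} (h : labs a ∈ H) : a ∈ H := hH.mem_of_labs_le h le_rfl

lemma mem_of_nonneg_le {a x : G} (hx : x ∈ H) (h0 : 0 ≤ a) (h : a ≤ x) : a ∈ H :=
  hH.convex hH.zero_mem hx h0 h

end IsConvexLSubgroup

namespace IsPrimeSubgroup

variable {P : Set G} (hP : IsPrimeSubgroup P)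
include hP

lemma labs_not_mem {a : G} (h : a ∉ P) : labs a ∉ P := fun hl => h (hP.1.mem_of_labs_mem hl)

lemma inf_labs_not_mem {a b : G} (ha : a ∉ P) (hb : b ∉ P) : labs a ⊓ labs b ∉ P := by
  intro h
  rcases hP.2.2 _ _ h with h' | h'
  · exact hP.labs_not_mem ha h'
  · exact hP.labs_not_mem hb h'

/-- If `|a| ⊓ |b| ∉ P` then `a ∉ P`. -/
lemma not_mem_of_inf_labs_not_mem {a b : G} (h : labs a ⊓ labs b ∉ P) : a ∉ P := by
  intro ha
  exact h (hP.1.mem_of_nonneg_le (hP.1.labs_mem ha) (le_inf (labs_nonneg a) (labs_nonneg b))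
    inf_le_left)

/-- If `|a| ⊔ |b| ∈ P` then `a ∈ P` and `b ∈ P`. -/
lemma mem_of_sup_labs_mem {a b : G} (h : labs a ⊔ labs b ∈ P) : a ∈ P ∧ b ∈ P := by
  constructor
  · exact hP.1.mem_of_labs_mem (hP.1.mem_of_nonneg_le h (labs_nonneg a) le_sup_left)
  · exact hP.1.mem_of_labs_mem (hP.1.mem_of_nonneg_le h (labs_nonneg b) le_sup_right)

lemma sup_labs_mem {a b : G} (ha : a ∈ P) (hb : b ∈ P) : labs a ⊔ labs b ∈ P :=
  hP.1.sup_mem (hP.1.labs_mem ha) (hP.1.labs_mem hb)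

end IsPrimeSubgroup

end Aux2

section Aux3
variable {G : Type*} [Lattice G] [AddCommGroup G]
    [CovariantClass G G (· + ·) (· ≤ ·)]
    [CovariantClass G G (Function.swap (· + ·)) (· ≤ ·)]

lemma inf_add_le_of_nonneg {a b c : G} (ha : 0 ≤ a) (hb : 0 ≤ b) (hc : 0 ≤ c) :
    (a + b) ⊓ c ≤ (a ⊓ c) + (b ⊓ c) := by
  have h1 : (a ⊓ c) + (b ⊓ c) = ((a + b) ⊓ (c + b)) ⊓ ((a + c) ⊓ (c + c)) := by
    rw [add_inf (b) (c) (a ⊓ c), inf_add a c b, inf_add a c c]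
  rw [h1]
  refine le_inf (le_inf inf_le_left ?_) (le_inf ?_ ?_)
  · exact inf_le_right.trans (le_add_of_nonneg_right hb)
  · exact inf_le_right.trans (le_add_of_nonneg_left ha)
  · exact inf_le_right.trans (le_add_of_nonneg_left hc)

lemma disj_add {a b c : G} (ha : 0 ≤ a) (hb : 0 ≤ b) (hc : 0 ≤ c)
    (h1 : a ⊓ c = 0) (h2 : b ⊓ c = 0) : (a + b) ⊓ c = 0 := by
  refine le_antisymm ?_ (le_inf (add_nonneg ha hb) hc)
  calc (a + b) ⊓ c ≤ (a ⊓ c) + (b ⊓ c) := inf_add_le_of_nonneg ha hb hc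
    _ = 0 := by rw [h1, h2, add_zero]

lemma disj_nsmul {a c : G} (ha : 0 ≤ a) (hc : 0 ≤ c) (h : a ⊓ c = 0) (n : ℕ) :
    (n • a) ⊓ c = 0 := by
  induction n with
  | zero => simpa using inf_eq_left.mpr hc
  | succ n ih =>
    rw [succ_nsmul]
    exact disj_add (nsmul_nonneg ha n) ha hc ih h

lemma disj_nsmul_nsmul {a b : G} (ha : 0 ≤ a) (hb : 0 ≤ b) (h : a ⊓ b = 0) (n m : ℕ) :
    (n • a) ⊓ (m • b) = 0 := by
  have hba : b ⊓ a = 0 := by rwa [inf_comm] at h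
  have h1 : (m • b) ⊓ a = 0 := disj_nsmul hb ha hba m
  have h2 : a ⊓ (m • b) = 0 := by rwa [inf_comm] at h1
  exact disj_nsmul ha (nsmul_nonneg hb m) h2 n

lemma labs_le_add_of_le_of_le {a g b : G} (h1 : a ≤ g) (h2 : g ≤ b) :
    labs g ≤ labs a + labs b := by
  rw [labs_eq_sup]
  refine sup_le ?_ ?_
  · have hb' : labs b ≤ labs a + labs b := le_add_of_nonneg_left (labs_nonneg a)
    exact h2.trans ((le_labs b).trans hb')
  · have ha' : labs a ≤ labs a + labs b := le_add_of_nonneg_right (labs_nonneg b)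
    exact (neg_le_neg_iff.mpr h1).trans ((neg_le_labs a).trans ha')

/-- The convex ℓ-subgroup generated by `H` and one extra element `x`. -/
def cgen (H : Set G) (x : G) : Set G :=
  {g : G | ∃ q ∈ H, 0 ≤ q ∧ ∃ n : ℕ, labs g ≤ q + n • labs x}

lemma subset_cgen {H : Set G} (hH : IsConvexLSubgroup H) (x : G) : H ⊆ cgen H x :=
  fun g hg => ⟨labs g, hH.labs_mem hg, labs_nonneg g, 0, by simp⟩

lemma mem_cgen_self (H : Set G) (hH : IsConvexLSubgroup H) (x : G) : x ∈ cgen H x :=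
  ⟨0, hH.zero_mem, le_rfl, 1, by simp⟩

lemma cgen_isConvexLSubgroup {H : Set G} (hH : IsConvexLSubgroup H) (x : G) :
    IsConvexLSubgroup (cgen H x) := by
  have habs0 : labs (0 : G) = 0 := labs_of_nonneg le_rfl
  refine ⟨⟨0, hH.zero_mem, le_rfl, 0, by simp [habs0]⟩, ?_, ?_, ?_, ?_, ?_⟩
  · rintro a ⟨q, hq, hq0, n, hn⟩
    exact ⟨q, hq, hq0, n, by rwa [labs_neg]⟩
  · rintro a ⟨q, hq, hq0, n, hn⟩ b ⟨r, hr, hr0, m, hm⟩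
    refine ⟨q + r, hH.add_mem hq hr, add_nonneg hq0 hr0, n + m, ?_⟩
    calc labs (a + b) ≤ labs a + labs b := labs_add_le a b
      _ ≤ (q + n • labs x) + (r + m • labs x) := add_le_add hn hm
      _ = (q + r) + (n + m) • labs x := by rw [add_nsmul]; abel
  · rintro a ⟨q, hq, hq0, n, hn⟩ b ⟨r, hr, hr0, m, hm⟩
    refine ⟨q + r, hH.add_mem hq hr, add_nonneg hq0 hr0, n + m, ?_⟩
    calc labs (a ⊔ b) ≤ labs a + labs b := labs_sup_le a b
      _ ≤ (q + n • labs x) + (r + m • labs x) := add_le_add hn hm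
      _ = (q + r) + (n + m) • labs x := by rw [add_nsmul]; abel
  · rintro a ⟨q, hq, hq0, n, hn⟩ b ⟨r, hr, hr0, m, hm⟩
    refine ⟨q + r, hH.add_mem hq hr, add_nonneg hq0 hr0, n + m, ?_⟩
    calc labs (a ⊓ b) ≤ labs a + labs b := labs_inf_le a b
      _ ≤ (q + n • labs x) + (r + m • labs x) := add_le_add hn hm
      _ = (q + r) + (n + m) • labs x := by rw [add_nsmul]; abel
  · rintro a ⟨q, hq, hq0, n, hn⟩ b ⟨r, hr, hr0, m, hm⟩ g h1 h2
    refine ⟨q + r, hH.add_mem hq hr, add_nonneg hq0 hr0, n + m, ?_⟩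
    calc labs g ≤ labs a + labs b := labs_le_add_of_le_of_le h1 h2
      _ ≤ (q + n • labs x) + (r + m • labs x) := add_le_add hn hm
      _ = (q + r) + (n + m) • labs x := by rw [add_nsmul]; abel

lemma singleton_zero_isConvexLSubgroup : IsConvexLSubgroup ({0} : Set G) := by
  refine ⟨rfl, ?_, ?_, ?_, ?_, ?_⟩ <;> simp only [Set.mem_singleton_iff]
  · rintro a rfl; simp
  · rintro a rfl b rfl; simp
  · rintro a rfl b rfl; simp
  · rintro a rfl b rfl; simp
  · rintro a rfl b rfl g h1 h2; exact le_antisymm h2 h1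

lemma sUnion_chain_isConvexLSubgroup {c : Set (Set G)} (hc : IsChain (· ⊆ ·) c)
    (hne : c.Nonempty) (hall : ∀ H ∈ c, IsConvexLSubgroup H) :
    IsConvexLSubgroup (⋃₀ c) := by
  obtain ⟨H0, hH0⟩ := hne
  have pair : ∀ a ∈ ⋃₀ c, ∀ b ∈ ⋃₀ c, ∃ H ∈ c, a ∈ H ∧ b ∈ H := by
    rintro a ⟨Ha, hHa, ha⟩ b ⟨Hb, hHb, hb⟩
    rcases hc.total hHa hHb with h | h
    · exact ⟨Hb, hHb, h ha, hb⟩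
    · exact ⟨Ha, hHa, ha, h hb⟩
  refine ⟨⟨H0, hH0, (hall H0 hH0).zero_mem⟩, ?_, ?_, ?_, ?_, ?_⟩
  · rintro a ⟨H, hHc, ha⟩; exact ⟨H, hHc, (hall H hHc).neg_mem ha⟩
  · intro a ha b hb
    obtain ⟨H, hHc, ha', hb'⟩ := pair a ha b hb
    exact ⟨H, hHc, (hall H hHc).add_mem ha' hb'⟩
  · intro a ha b hb
    obtain ⟨H, hHc, ha', hb'⟩ := pair a ha b hb
    exact ⟨H, hHc, (hall H hHc).sup_mem ha' hb'⟩
  · intro a ha b hb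
    obtain ⟨H, hHc, ha', hb'⟩ := pair a ha b hb
    exact ⟨H, hHc, (hall H hHc).inf_mem ha' hb'⟩
  · intro a ha b hb g h1 h2
    obtain ⟨H, hHc, ha', hb'⟩ := pair a ha b hb
    exact ⟨H, hHc, (hall H hHc).convex ha' hb' h1 h2⟩

end Aux3

section Aux4
variable {G : Type*} [Lattice G] [AddCommGroup G]
    [CovariantClass G G (· + ·) (· ≤ ·)]
    [CovariantClass G G (Function.swap (· + ·)) (· ≤ ·)]

/-- Given a nonempty meet-closed set `T` of nonnegative elements with `0 ∉ T`,
there is a prime subgroup disjoint from `T`. -/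
lemma exists_prime_disjoint (T : Set G) (hTpos : ∀ t ∈ T, 0 ≤ t) (hTne : T.Nonempty)
    (hTinf : ∀ t1 ∈ T, ∀ t2 ∈ T, t1 ⊓ t2 ∈ T) (hT0 : (0 : G) ∉ T) :
    ∃ P : Set G, IsPrimeSubgroup P ∧ ∀ t ∈ T, t ∉ P := by
  set S : Set (Set G) := {H | IsConvexLSubgroup H ∧ ∀ t ∈ T, t ∉ H} with hS
  have h0S : ({0} : Set G) ∈ S := by
    refine ⟨singleton_zero_isConvexLSubgroup, ?_⟩
    rintro t ht rfl; exact hT0 ht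
  have hub : ∀ c ⊆ S, IsChain (· ⊆ ·) c → c.Nonempty → ∃ ub ∈ S, ∀ s ∈ c, s ⊆ ub := by
    intro c hcS hchain hcne
    refine ⟨⋃₀ c, ⟨sUnion_chain_isConvexLSubgroup hchain hcne (fun H hH => (hcS hH).1), ?_⟩,
      fun s hs => Set.subset_sUnion_of_mem hs⟩
    rintro t ht ⟨H, hHc, htH⟩
    exact (hcS hHc).2 t ht htH
  obtain ⟨m, -, hm⟩ := zorn_subset_nonempty S hub _ h0S
  obtain ⟨hmC, hmT⟩ := hm.prop
  obtain ⟨t0, ht0⟩ := hTne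
  have hmax : ∀ x : G, x ∉ m → ∃ t ∈ T, t ∈ cgen m x := by
    intro x hx
    by_contra hcon
    push_neg at hcon
    have hin : cgen m x ∈ S := ⟨cgen_isConvexLSubgroup hmC x, hcon⟩
    have := hm.le_of_ge hin (subset_cgen hmC x)
    exact hx (this (mem_cgen_self m hmC x))
  refine ⟨m, ⟨hmC, ?_, ?_⟩, hmT⟩
  · intro h
    exact hmT t0 ht0 (h ▸ Set.mem_univ t0)
  · intro u v huv
    by_contra hcon
    push_neg at hcon
    obtain ⟨hu, hv⟩ := hcon
    set w := u ⊓ v with hw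
    set a := u - w with hadef
    set b := v - w with hbdef
    have ha0 : 0 ≤ a := sub_nonneg.mpr inf_le_left
    have hb0 : 0 ≤ b := sub_nonneg.mpr inf_le_right
    have hab : a ⊓ b = 0 := by rw [hadef, hbdef, ← inf_sub, hw, sub_self]
    have ham : a ∉ m := fun h => hu (by
      have := hmC.add_mem h huv
      rwa [hadef, sub_add_cancel] at this)
    have hbm : b ∉ m := fun h => hv (by
      have := hmC.add_mem h huv
      rwa [hbdef, sub_add_cancel] at this)
    obtain ⟨t1, ht1T, q1, hq1m, hq10, n1, hn1⟩ := hmax a ham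
    obtain ⟨t2, ht2T, q2, hq2m, hq20, n2, hn2⟩ := hmax b hbm
    have hla : labs a = a := labs_of_nonneg ha0
    have hlb : labs b = b := labs_of_nonneg hb0
    rw [hla] at hn1
    rw [hlb] at hn2
    have ht : t1 ⊓ t2 ∈ T := hTinf t1 ht1T t2 ht2T
    have key : t1 ⊓ t2 ≤ q1 + q2 := by
      have e1 : t1 ≤ q1 + q2 + n1 • a := by
        refine ((le_labs t1).trans hn1).trans ?_
        have : q1 + n1 • a ≤ q1 + q2 + n1 • a := by
          exact add_le_add (le_add_of_nonneg_right hq20) le_rfl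
        exact this
      have e2 : t2 ≤ q1 + q2 + n2 • b := by
        refine ((le_labs t2).trans hn2).trans ?_
        have : q2 + n2 • b ≤ q1 + q2 + n2 • b := by
          exact add_le_add (le_add_of_nonneg_left hq10) le_rfl
        exact this
      calc t1 ⊓ t2 ≤ (q1 + q2 + n1 • a) ⊓ (q1 + q2 + n2 • b) := inf_le_inf e1 e2
        _ = q1 + q2 + (n1 • a) ⊓ (n2 • b) := (add_inf _ _ _).symm
        _ = q1 + q2 := by rw [disj_nsmul_nsmul ha0 hb0 hab n1 n2, add_zero]
    have : t1 ⊓ t2 ∈ m :=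
      hmC.mem_of_nonneg_le (hmC.add_mem hq1m hq2m) (hTpos _ ht) key
    exact hmT _ ht this

/-- For a minimal prime `Q` and `b ∈ Q`, there is `c ∉ Q` disjoint from `b`. -/
lemma minimal_prime_disjoint {Q : Set G} (hQ : IsMinimalPrimeLSubgroup Q) {b : G} (hb : b ∈ Q) :
    ∃ c, c ∉ Q ∧ labs b ⊓ labs c = 0 := by
  obtain ⟨hQp, hQmin⟩ := hQ
  obtain ⟨c0, hc0⟩ := Set.ne_univ_iff_exists_notMem _ |>.mp hQp.2.1
  by_cases hb0 : b = 0
  · refine ⟨c0, hc0, ?_⟩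
    rw [hb0, labs_of_nonneg le_rfl]
    exact inf_eq_left.mpr (labs_nonneg c0)
  by_contra hcon
  push_neg at hcon
  set T : Set G := insert (labs b) {y | ∃ x, 0 ≤ x ∧ x ∉ Q ∧ y = labs b ⊓ x} with hT
  have hTpos : ∀ t ∈ T, 0 ≤ t := by
    rintro t (rfl | ⟨x, hx0, hxQ, rfl⟩)
    · exact labs_nonneg b
    · exact le_inf (labs_nonneg b) hx0
  have hTne : T.Nonempty := ⟨labs b, Set.mem_insert _ _⟩
  have hT0 : (0 : G) ∉ T := by
    rintro (h | ⟨x, hx0, hxQ, hx⟩)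
    · exact hb0 (labs_eq_zero h.symm)
    · refine hcon x hxQ ?_
      rw [labs_of_nonneg hx0]
      exact hx.symm
  have hTinf : ∀ t1 ∈ T, ∀ t2 ∈ T, t1 ⊓ t2 ∈ T := by
    rintro t1 (rfl | ⟨x, hx0, hxQ, rfl⟩) t2 (rfl | ⟨y, hy0, hyQ, rfl⟩)
    · rw [inf_idem]; exact Set.mem_insert _ _
    · refine Set.mem_insert_of_mem _ ⟨y, hy0, hyQ, ?_⟩
      rw [← inf_assoc, inf_idem]
    · refine Set.mem_insert_of_mem _ ⟨x, hx0, hxQ, ?_⟩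
      rw [inf_comm (labs b ⊓ x) (labs b), ← inf_assoc, inf_idem]
    · refine Set.mem_insert_of_mem _ ⟨x ⊓ y, le_inf hx0 hy0, ?_, ?_⟩
      · intro h
        rcases hQp.2.2 x y h with h' | h'
        · exact hxQ h'
        · exact hyQ h'
      · rw [inf_inf_inf_comm, inf_idem]
  obtain ⟨P, hPp, hPT⟩ := exists_prime_disjoint T hTpos hTne hTinf hT0
  have hPQ : P ⊆ Q := by
    intro x hxP
    by_contra hxQ
    have h1 : labs b ⊓ labs x ∈ T :=
      Set.mem_insert_of_mem _ ⟨labs x, labs_nonneg x, hQp.labs_not_mem hxQ, rfl⟩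
    have h2 : labs b ⊓ labs x ∈ P :=
      hPp.1.mem_of_nonneg_le (hPp.1.labs_mem hxP) (le_inf (labs_nonneg b) (labs_nonneg x))
        inf_le_right
    exact hPT _ h1 h2
  have : P = Q := hQmin P hPp hPQ
  have hbP : b ∉ P := fun h => hPT _ (Set.mem_insert _ _) (hPp.1.labs_mem h)
  rw [this] at hbP
  exact hbP hb

end Aux4

section Aux5
variable {G : Type*} [Lattice G] [AddCommGroup G]
    [CovariantClass G G (· + ·) (· ≤ ·)]
    [CovariantClass G G (Function.swap (· + ·)) (· ≤ ·)]

/-- Key separation lemma. -/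
lemma key_lemma (PP : Set (Set G)) (hPP : ∀ P ∈ PP, IsPrimeSubgroup P)
    (hint : ⋂₀ PP = {(0 : G)}) {Q : Set G} (hQ : IsMinimalPrimeLSubgroup Q)
    {a b : G} (ha : a ∉ Q) (hb : b ∈ Q) : ∃ P ∈ PP, a ∉ P ∧ b ∈ P := by
  obtain ⟨c, hc, hdisj⟩ := minimal_prime_disjoint hQ hb
  set d := labs a ⊓ labs c with hd
  have hd0 : 0 ≤ d := le_inf (labs_nonneg a) (labs_nonneg c)
  have hdQ : d ∉ Q := hQ.1.inf_labs_not_mem ha hc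
  have hdne : d ≠ 0 := fun h => hdQ (h ▸ hQ.1.1.zero_mem)
  have hdPP : d ∉ ⋂₀ PP := fun h => hdne (by rwa [hint, Set.mem_singleton_iff] at h)
  obtain ⟨P, hPmem, hdP⟩ : ∃ P ∈ PP, d ∉ P := by
    by_contra h
    push_neg at h
    exact hdPP (fun P hP => h P hP)
  have hPp : IsPrimeSubgroup P := hPP P hPmem
  refine ⟨P, hPmem, ?_, ?_⟩
  · intro haP
    exact hdP (hPp.1.mem_of_nonneg_le (hPp.1.labs_mem haP) hd0 inf_le_left)
  · have hbd : labs b ⊓ d = 0 := by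
      refine le_antisymm ?_ (le_inf (labs_nonneg b) hd0)
      calc labs b ⊓ d ≤ labs b ⊓ labs c := inf_le_inf_left _ inf_le_right
        _ = 0 := hdisj
    have h0P : labs b ⊓ d ∈ P := hbd ▸ hPp.1.zero_mem
    rcases hPp.2.2 _ _ h0P with h' | h'
    · exact hPp.1.mem_of_labs_mem h'
    · exact absurd h' hdP

/-- From any patch-open set containing a prime `Q`, extract a two-element condition. -/
lemma open_witness {Q : Set G} (hQp : IsPrimeSubgroup Q) {o : Set (SpecType G)}
    (ho : TopologicalSpace.GenerateOpen
      ({S : Set (SpecType G) | ∃ g : G, S = Uset g} ∪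
        {S : Set (SpecType G) | ∃ g : G, S = Vset g}) o) :
    (⟨Q, hQp⟩ : SpecType G) ∈ o →
      ∃ a b : G, a ∉ Q ∧ b ∈ Q ∧ ∀ P : SpecType G, a ∉ P.1 → b ∈ P.1 → P ∈ o := by
  obtain ⟨a0, ha0⟩ := Set.ne_univ_iff_exists_notMem _ |>.mp hQp.2.1
  induction ho with
  | basic s hs =>
    intro hQs
    rcases hs with ⟨g, rfl⟩ | ⟨g, rfl⟩
    · exact ⟨g, 0, hQs, hQp.1.zero_mem, fun P h1 _ => h1⟩
    · exact ⟨a0, g, ha0, hQs, fun P _ h2 => h2⟩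
  | univ => exact fun _ => ⟨a0, 0, ha0, hQp.1.zero_mem, fun P _ _ => Set.mem_univ P⟩
  | inter s t _ _ ihs iht =>
    intro hQst
    obtain ⟨a1, b1, ha1, hb1, hs1⟩ := ihs hQst.1
    obtain ⟨a2, b2, ha2, hb2, ht2⟩ := iht hQst.2
    refine ⟨labs a1 ⊓ labs a2, labs b1 ⊔ labs b2, hQp.inf_labs_not_mem ha1 ha2,
      hQp.sup_labs_mem hb1 hb2, ?_⟩
    intro P h1 h2
    have ha1P := P.2.not_mem_of_inf_labs_not_mem h1
    have ha2P := P.2.not_mem_of_inf_labs_not_mem (by rwa [inf_comm] at h1)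
    obtain ⟨hb1P, hb2P⟩ := P.2.mem_of_sup_labs_mem h2
    exact ⟨hs1 P ha1P hb1P, ht2 P ha2P hb2P⟩
  | sUnion S _ ih =>
    rintro ⟨s, hsS, hQs⟩
    obtain ⟨a, b, ha, hb, hw⟩ := ih s hsS hQs
    exact ⟨a, b, ha, hb, fun P h1 h2 => ⟨s, hsS, hw P h1 h2⟩⟩

end Aux5


/-- for an abelian ℓ-group `G` and a nonempty set `𝓟` of primes
with `⋂𝓟 = {0}`, every minimal prime subgroup of `G` lies in the patch
closure of `𝓟` in `Spec(G)`. -/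
theorem stmt_19 {G : Type*} [Lattice G] [AddCommGroup G]
    [CovariantClass G G (· + ·) (· ≤ ·)]
    [CovariantClass G G (Function.swap (· + ·)) (· ≤ ·)]
    (PP : Set (Set G)) (hPP : ∀ P ∈ PP, IsPrimeSubgroup P) (hne : PP.Nonempty)
    (hint : ⋂₀ PP = {(0 : G)}) (Q : Set G) (hQ : IsMinimalPrimeLSubgroup Q) :
    (⟨Q, hQ.1⟩ : SpecType G) ∈ @closure _ (patchTop G) {P : SpecType G | P.1 ∈ PP} := by
  letI : TopologicalSpace (SpecType G) := patchTop G
  rw [mem_closure_iff]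
  intro o ho hQo
  have ho' : TopologicalSpace.GenerateOpen
      ({S : Set (SpecType G) | ∃ g : G, S = Uset g} ∪
        {S : Set (SpecType G) | ∃ g : G, S = Vset g}) o := ho
  obtain ⟨a, b, ha, hb, hw⟩ := open_witness hQ.1 ho' hQo
  obtain ⟨P, hPmem, haP, hbP⟩ := key_lemma PP hPP hint hQ ha hb
  exact ⟨⟨P, hPP P hPmem⟩, hw _ haP hbP, hPmem⟩
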